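/- arXiv:1404.0648 — 2 statements merged into one kernel-verified Lean document; each statement's English description precedes it below -/
import Mathlib

section
/- Let ρ > 0, ε ∈ [0,1), ν ∈ [0,1], m₁ ∈ ℝ and η ∈ ℝ with η ≠ 0. Define b(u) = (1/(1−ε))·(ρu/(2+ρu))·(m₁/ρ)·𝒢_η(u), k(u) = ((1−ε)/2)·b(u) + m₁/(2ρ), and c(u) = −(1/(1−ε))·((ρu/2)/(2+ρu))·(m₁²/ρ²)·𝒢_η(u)² − (m₁²/(8(1−ε)ρ))·(1 − νρ/η)²·u·ζ(ηu)·[1 + exp(−ηu) − 2·ζ(ηu)]. Then c(0) = 0 and, for all u ≥ 0, c'(u) = −2η·c(u) + (1−ν)·m₁·b(u) − (ρ/(1−ε))·k(u)². -/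
/-- ζ(0) = 1 and ζ(y) = (1 − exp(−y))/y for y ≠ 0. -/
noncomputable def zeta (y : ℝ) : ℝ := if y = 0 then 1 else (1 - Real.exp (-y)) / y

/-- ω(0) = 1/2 and ω(y) = (exp(−y) − 1 + y)/y² for y ≠ 0. -/
noncomputable def omegaFn (y : ℝ) : ℝ := if y = 0 then 1 / 2 else (Real.exp (-y) - 1 + y) / y ^ 2

/-- 𝒢_η(u) = ζ(ηu) + νρu·ω(ηu). -/
noncomputable def Gfun (η ν ρ : ℝ) (u : ℝ) : ℝ := zeta (η * u) + ν * ρ * u * omegaFn (η * u)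

/-- b(u) = (1/(1−ε))·(ρu/(2+ρu))·(m₁/ρ)·𝒢_η(u). -/
noncomputable def bFn (ρ ε ν m₁ η : ℝ) (u : ℝ) : ℝ :=
  (1 / (1 - ε)) * (ρ * u / (2 + ρ * u)) * (m₁ / ρ) * Gfun η ν ρ u

/-- k(u) = ((1−ε)/2)·b(u) + m₁/(2ρ). -/
noncomputable def kFn (ρ ε ν m₁ η : ℝ) (u : ℝ) : ℝ :=
  ((1 - ε) / 2) * bFn ρ ε ν m₁ η u + m₁ / (2 * ρ)

/-- c(u) in the non-critical case η ≠ 0. -/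
noncomputable def cFn (ρ ε ν m₁ η : ℝ) (u : ℝ) : ℝ :=
  -(1 / (1 - ε)) * ((ρ * u / 2) / (2 + ρ * u)) * (m₁ ^ 2 / ρ ^ 2) * (Gfun η ν ρ u) ^ 2
    - (m₁ ^ 2 / (8 * (1 - ε) * ρ)) * (1 - ν * ρ / η) ^ 2 * u * zeta (η * u)
        * (1 + Real.exp (-(η * u)) - 2 * zeta (η * u))

/-!
Write `s = 1 - exp (-ηu)`. For `ηu ≠ 0` one has `ζ(ηu) = s / (ηu)` and `ω(ηu) = (ηu - s) / (ηu)²`,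
so `b` and `c` are rational in `u` and `s`. In `c` the `s² / u` singularities of its two terms cancel,
and the resulting closed form `cClosed` also holds at `u = 0`, where both sides vanish.
Since `s' = η (1 - s)`, the equation for `c'` becomes an identity between rational functions
of `u` and `exp (-ηu)`.
-/

open Real Filter Topology

noncomputable def cClosed (ρ ε ν m₁ η u : ℝ) : ℝ :=
  m₁ ^ 2 / (1 - ε) *
    (((η - ν * ρ) ^ 2 / (4 * η ^ 4) * (1 - exp (-(η * u))) ^ 2
        - ν * (η - ν * ρ) / η ^ 3 * (1 - exp (-(η * u)))
        - ν ^ 2 * ρ / (2 * η ^ 2) * u) / (2 + ρ * u)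
      - (η - ν * ρ) ^ 2 / (8 * ρ * η ^ 3) * (1 - exp (-(η * u)) ^ 2))

section

variable {ρ ε ν m₁ η u : ℝ}

theorem bFn_eq (hρ : ρ ≠ 0) (hη : η ≠ 0) (hε : 1 - ε ≠ 0) (h2 : 2 + ρ * u ≠ 0) :
    bFn ρ ε ν m₁ η u = m₁ * ((η - ν * ρ) * (1 - exp (-(η * u))) + ν * ρ * η * u)
      / ((1 - ε) * η ^ 2 * (2 + ρ * u)) := by
  rcases eq_or_ne u 0 with rfl | hu
  · simp [bFn]
  · simp only [bFn, Gfun, zeta, omegaFn, if_neg (mul_ne_zero hη hu)]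
    field_simp
    ring

theorem cFn_eq_cClosed (hρ : ρ ≠ 0) (hη : η ≠ 0) (hε : 1 - ε ≠ 0) (h2 : 2 + ρ * u ≠ 0) :
    cFn ρ ε ν m₁ η u = cClosed ρ ε ν m₁ η u := by
  rcases eq_or_ne u 0 with rfl | hu
  · simp [cFn, cClosed, zeta]
  · simp only [cFn, cClosed, Gfun, zeta, omegaFn, if_neg (mul_ne_zero hη hu)]
    field_simp
    ring

theorem hasDerivAt_cClosed (hρ : ρ ≠ 0) (hη : η ≠ 0) (hε : 1 - ε ≠ 0) (h2 : 2 + ρ * u ≠ 0) :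
    HasDerivAt (cClosed ρ ε ν m₁ η)
      (-(2 * η) * cClosed ρ ε ν m₁ η u + (1 - ν) * m₁ * bFn ρ ε ν m₁ η u
        - (ρ / (1 - ε)) * (kFn ρ ε ν m₁ η u) ^ 2) u := by
  have hE := ((hasDerivAt_id' u).const_mul η).fun_neg.exp
  have hs := hE.const_sub 1
  have hnum := (((hs.fun_pow 2).const_mul ((η - ν * ρ) ^ 2 / (4 * η ^ 4))).fun_sub
    (hs.const_mul (ν * (η - ν * ρ) / η ^ 3))).fun_sub
    ((hasDerivAt_id' u).const_mul (ν ^ 2 * ρ / (2 * η ^ 2)))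
  have hden := ((hasDerivAt_id' u).const_mul ρ).const_add 2
  have h : HasDerivAt (cClosed ρ ε ν m₁ η) _ u := ((hnum.fun_div hden h2).fun_sub
    (((hE.fun_pow 2).const_sub 1).const_mul ((η - ν * ρ) ^ 2 / (8 * ρ * η ^ 3)))).const_mul
    (m₁ ^ 2 / (1 - ε))
  refine h.congr_deriv ?_
  rw [kFn, bFn_eq hρ hη hε h2, cClosed]
  field_simp
  ring

end

theorem cFn_ODE_general (ρ ε ν m₁ η : ℝ) (hρ : 0 < ρ) (hε : ε ∈ Set.Ico (0:ℝ) 1)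
    (hη : η ≠ 0) :
    cFn ρ ε ν m₁ η 0 = 0 ∧
    ∀ u : ℝ, 0 ≤ u →
      HasDerivAt (cFn ρ ε ν m₁ η)
        (-(2 * η) * cFn ρ ε ν m₁ η u + (1 - ν) * m₁ * bFn ρ ε ν m₁ η u
          - (ρ / (1 - ε)) * (kFn ρ ε ν m₁ η u) ^ 2) u := by
  have hε' : 1 - ε ≠ 0 := by linarith [hε.2]
  refine ⟨by simp [cFn, zeta], fun u hu ↦ ?_⟩
  have hpos : ∀ᶠ x in 𝓝 u, 0 < 2 + ρ * x :=
    (show Continuous fun x ↦ 2 + ρ * x by fun_prop).continuousAt.tendsto.eventually_const_lt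
      (by nlinarith)
  have hev : cFn ρ ε ν m₁ η =ᶠ[𝓝 u] cClosed ρ ε ν m₁ η :=
    hpos.mono fun x hx ↦ cFn_eq_cClosed hρ.ne' hη hε' hx.ne'
  rw [hev.eq_of_nhds]
  exact (hasDerivAt_cClosed hρ.ne' hη hε' hpos.self_of_nhds.ne').congr_of_eventuallyEq hev

theorem cFn_ODE (ρ ε ν m₁ η : ℝ) (hρ : 0 < ρ) (hε : ε ∈ Set.Ico (0:ℝ) 1)
    (hν : ν ∈ Set.Icc (0:ℝ) 1) (hη : η ≠ 0) :
    cFn ρ ε ν m₁ η 0 = 0 ∧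
    ∀ u : ℝ, 0 ≤ u →
      HasDerivAt (cFn ρ ε ν m₁ η)
        (-(2 * η) * cFn ρ ε ν m₁ η u + (1 - ν) * m₁ * bFn ρ ε ν m₁ η u
          - (ρ / (1 - ε)) * (kFn ρ ε ν m₁ η u) ^ 2) u :=
  cFn_ODE_general ρ ε ν m₁ η hρ hε hη
end

section
/- Let ρ > 0, ν ∈ [0,1], β, α ∈ ℝ with η = β − α ≠ 0, and T > 0. Define φ_η(t) = [1 + exp(−η(T−t)) + νρ(T−t)·ζ(η(T−t)) + (β/ρ)·(2 + ρ(T−t)·{1 + ζ(η(T−t)) + νρ(T−t)·ω(η(T−t))})] / (2·(2 + ρ(T−t))). Then for all 0 ≤ s ≤ t ≤ T: ∫ₛᵗ φ_η(u)·exp(−βu) du = (1/2)·(1/ρ + ν/η)·[exp(−βs) − exp(−βt)] + (exp(−βT)/(2ρ))·[1 + ν(ρ−2β)/η + (β/η)·(1 − νρ/η)]·[L(ρ, β, T−s) − L(ρ, β, T−t)] + (exp(−βT)/(2ρ))·[1 − νρ/η − (β/η)·(1 − νρ/η)]·[L(ρ, α, T−s) − L(ρ, α, T−t)]. -/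
/-- φ_η(t) of the optimal strategy. -/
noncomputable def phiFn (ρ ν β η T : ℝ) (t : ℝ) : ℝ :=
  (1 + Real.exp (-(η * (T - t))) + ν * ρ * (T - t) * zeta (η * (T - t))
      + (β / ρ) * (2 + ρ * (T - t)
          * (1 + zeta (η * (T - t)) + ν * ρ * (T - t) * omegaFn (η * (T - t)))))
    / (2 * (2 + ρ * (T - t)))

/-- L(r, λ, t) = r·∫₀ᵗ exp(λs)/(2 + rs) ds. -/
noncomputable def Lfun (r lam t : ℝ) : ℝ := r * ∫ s in (0:ℝ)..t, Real.exp (lam * s) / (2 + r * s)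


/-! For `η ≠ 0` the combinations `τ ζ(ητ)` and `τ² ω(ητ)` equal `(1 - e^{-ητ})/η` and
`(e^{-ητ} - 1 + ητ)/η²` (also at `τ = 0`), so `φ_η(u) e^{-βu}` is a linear combination of
`β e^{-βu}` and of `ρ e^{λ(T-u)}/(2 + ρ(T-u))` for `λ = β` and `λ = α = β - η`. The substitution
`x = T - u` turns the integral of the latter over `[s, t]` into `L(ρ, λ, T - s) - L(ρ, λ, T - t)`. -/

open Real Set intervalIntegral

theorem integral_mul_exp_neg_mul (c a b : ℝ) :
    ∫ u in a..b, c * exp (-(c * u)) = exp (-(c * a)) - exp (-(c * b)) := by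
  have hderiv (x : ℝ) : HasDerivAt (fun u => -exp (-(c * u))) (c * exp (-(c * x))) x :=
    ((hasDerivAt_id x).const_mul c).neg.exp.neg.congr_deriv (by simp; ring)
  rw [integral_eq_sub_of_hasDerivAt (fun x _ => hderiv x)
    (Continuous.intervalIntegrable (by fun_prop) a b)]
  ring

section Lfun

variable {r lam : ℝ}

theorem continuousOn_exp_mul_div_two_add_mul (hr : 0 ≤ r) :
    ContinuousOn (fun x => exp (lam * x) / (2 + r * x)) (Ici 0) :=
  (by fun_prop : Continuous fun x => exp (lam * x)).continuousOn.div (by fun_prop)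
    fun x (hx : 0 ≤ x) => by positivity

theorem intervalIntegrable_exp_mul_div_two_add_mul (hr : 0 ≤ r) {a b : ℝ} (ha : 0 ≤ a)
    (hb : 0 ≤ b) : IntervalIntegrable (fun x => exp (lam * x) / (2 + r * x)) MeasureTheory.volume a b :=
  ((continuousOn_exp_mul_div_two_add_mul hr).mono
    fun _ hx => (le_min ha hb).trans hx.1).intervalIntegrable

theorem Lfun_sub_Lfun (hr : 0 ≤ r) {a b : ℝ} (ha : 0 ≤ a) (hb : 0 ≤ b) :
    Lfun r lam b - Lfun r lam a = r * ∫ x in a..b, exp (lam * x) / (2 + r * x) := by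
  rw [Lfun, Lfun, ← mul_sub, integral_interval_sub_left
    (intervalIntegrable_exp_mul_div_two_add_mul hr le_rfl hb)
    (intervalIntegrable_exp_mul_div_two_add_mul hr le_rfl ha)]

theorem mul_integral_exp_mul_sub_div_eq_Lfun_sub (hr : 0 ≤ r) {s t T : ℝ} (hs : s ≤ T) (ht : t ≤ T) :
    r * ∫ u in s..t, exp (lam * (T - u)) / (2 + r * (T - u))
      = Lfun r lam (T - s) - Lfun r lam (T - t) := by
  rw [integral_comp_sub_left (fun x => exp (lam * x) / (2 + r * x)),
    Lfun_sub_Lfun hr (sub_nonneg.2 ht) (sub_nonneg.2 hs)]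

theorem intervalIntegrable_exp_mul_sub_div (hr : 0 ≤ r) {s t T : ℝ} (hs : s ≤ T) (ht : t ≤ T) :
    IntervalIntegrable (fun u => exp (lam * (T - u)) / (2 + r * (T - u))) MeasureTheory.volume s t := by
  simpa using ((intervalIntegrable_exp_mul_div_two_add_mul hr (sub_nonneg.2 ht)
    (sub_nonneg.2 hs)).comp_sub_left T).symm

end Lfun

theorem mul_zeta_mul {η : ℝ} (hη : η ≠ 0) (τ : ℝ) :
    τ * zeta (η * τ) = (1 - exp (-(η * τ))) / η := by
  rcases eq_or_ne τ 0 with rfl | hτ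
  · simp
  · rw [zeta, if_neg (mul_ne_zero hη hτ)]
    field_simp

theorem sq_mul_omegaFn_mul {η : ℝ} (hη : η ≠ 0) (τ : ℝ) :
    τ ^ 2 * omegaFn (η * τ) = (exp (-(η * τ)) - 1 + η * τ) / η ^ 2 := by
  rcases eq_or_ne τ 0 with rfl | hτ
  · simp
  · rw [omegaFn, if_neg (mul_ne_zero hη hτ)]
    field_simp

theorem phiFn_eq {η : ℝ} (hη : η ≠ 0) (ρ ν β T t : ℝ) :
    phiFn ρ ν β η T t =
      (1 + exp (-(η * (T - t))) + ν * ρ * (1 - exp (-(η * (T - t)))) / η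
        + (β / ρ) * (2 + ρ * (T - t) + ρ * (1 - exp (-(η * (T - t)))) / η
          + ν * ρ ^ 2 * (exp (-(η * (T - t))) - 1 + η * (T - t)) / η ^ 2))
      / (2 * (2 + ρ * (T - t))) := by
  rw [phiFn]
  congr 1
  linear_combination (ν * ρ + β / ρ * ρ) * mul_zeta_mul hη (T - t)
    + β / ρ * ν * ρ ^ 2 * sq_mul_omegaFn_mul hη (T - t)

theorem phiFn_mul_exp {ρ T u : ℝ} (hρ : ρ ≠ 0) (hu : 2 + ρ * (T - u) ≠ 0) (ν β α : ℝ)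
    (hη : β - α ≠ 0) :
    phiFn ρ ν β (β - α) T u * exp (-(β * u))
      = (1 / 2) * (1 / ρ + ν / (β - α)) * (β * exp (-(β * u)))
        + (exp (-(β * T)) / (2 * ρ))
            * (1 + ν * (ρ - 2 * β) / (β - α) + (β / (β - α)) * (1 - ν * ρ / (β - α)))
            * (ρ * (exp (β * (T - u)) / (2 + ρ * (T - u))))
        + (exp (-(β * T)) / (2 * ρ))
            * (1 - ν * ρ / (β - α) - (β / (β - α)) * (1 - ν * ρ / (β - α)))
            * (ρ * (exp (α * (T - u)) / (2 + ρ * (T - u)))) := by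
  have hβ : exp (β * (T - u)) = exp (-(β * u)) / exp (-(β * T)) := by
    rw [eq_div_iff (exp_ne_zero _), ← exp_add]; ring_nf
  have hα : exp (α * (T - u)) = exp (-(β * u)) * exp (-((β - α) * (T - u))) / exp (-(β * T)) := by
    rw [eq_div_iff (exp_ne_zero _), ← exp_add, ← exp_add]; ring_nf
  rw [phiFn_eq hη, hβ, hα]
  generalize T - u = τ at hu ⊢
  -- `field_simp` writes this denominator as `2 + τ * ρ`
  rw [mul_comm] at hu
  field_simp
  ring

theorem integral_phiFn_general (ρ ν β α T : ℝ) (hρ : 0 < ρ)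
    (hη : β - α ≠ 0) :
    ∀ s t : ℝ, 0 ≤ s → s ≤ t → t ≤ T →
      (∫ u in s..t, phiFn ρ ν β (β - α) T u * Real.exp (-(β * u)))
        = (1 / 2) * (1 / ρ + ν / (β - α)) * (Real.exp (-(β * s)) - Real.exp (-(β * t)))
          + (Real.exp (-(β * T)) / (2 * ρ))
              * (1 + ν * (ρ - 2 * β) / (β - α) + (β / (β - α)) * (1 - ν * ρ / (β - α)))
              * (Lfun ρ β (T - s) - Lfun ρ β (T - t))
          + (Real.exp (-(β * T)) / (2 * ρ))
              * (1 - ν * ρ / (β - α) - (β / (β - α)) * (1 - ν * ρ / (β - α)))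
              * (Lfun ρ α (T - s) - Lfun ρ α (T - t)) := by
  intro s t _ hst htT
  have hsT : s ≤ T := hst.trans htT
  have hden {u : ℝ} (hu : u ∈ uIcc s t) : 2 + ρ * (T - u) ≠ 0 := by
    nlinarith [(uIcc_of_le hst ▸ hu).2]
  have hL (lam c : ℝ) : IntervalIntegrable
      (fun u => c * (ρ * (exp (lam * (T - u)) / (2 + ρ * (T - u))))) MeasureTheory.volume s t :=
    ((intervalIntegrable_exp_mul_sub_div hρ.le hsT htT).const_mul ρ).const_mul c
  have hexp : IntervalIntegrable (fun u => (1 / 2) * (1 / ρ + ν / (β - α)) * (β * exp (-(β * u))))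
      MeasureTheory.volume s t := Continuous.intervalIntegrable (by fun_prop) s t
  rw [integral_congr fun u hu => phiFn_mul_exp hρ.ne' (hden hu) ν β α hη,
    integral_add (hexp.add (hL β _)) (hL α _), integral_add hexp (hL β _),
    integral_const_mul, integral_mul_exp_neg_mul]
  simp only [integral_const_mul]
  rw [mul_integral_exp_mul_sub_div_eq_Lfun_sub hρ.le hsT htT,
    mul_integral_exp_mul_sub_div_eq_Lfun_sub hρ.le hsT htT]

theorem integral_phiFn (ρ ν β α T : ℝ) (hρ : 0 < ρ) (hν : ν ∈ Set.Icc (0:ℝ) 1)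
    (hη : β - α ≠ 0) (hT : 0 < T) :
    ∀ s t : ℝ, 0 ≤ s → s ≤ t → t ≤ T →
      (∫ u in s..t, phiFn ρ ν β (β - α) T u * Real.exp (-(β * u)))
        = (1 / 2) * (1 / ρ + ν / (β - α)) * (Real.exp (-(β * s)) - Real.exp (-(β * t)))
          + (Real.exp (-(β * T)) / (2 * ρ))
              * (1 + ν * (ρ - 2 * β) / (β - α) + (β / (β - α)) * (1 - ν * ρ / (β - α)))
              * (Lfun ρ β (T - s) - Lfun ρ β (T - t))
          + (Real.exp (-(β * T)) / (2 * ρ))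
              * (1 - ν * ρ / (β - α) - (β / (β - α)) * (1 - ν * ρ / (β - α)))
              * (Lfun ρ α (T - s) - Lfun ρ α (T - t)) :=
  integral_phiFn_general ρ ν β α T hρ hη
end
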